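/- Let ρ > 4μ² > 0 and set t_∓ = (ρ ∓ √(ρ² − 4μ²ρ))/(2ρ), x_∓ = e^{t_∓}, so that 1 < x_− < x_+. The function g(x) := x²·(μ² + ρ(1 − log x)²) is strictly increasing on (0, x_−], strictly decreasing on [x_−, x_+], and strictly increasing on [x_+, ∞); its local maximum value is g(x_−) = ρ·x_−²·log x_+ and its local minimum value is g(x_+) = ρ·x_+²·log x_−, with 0 < g(x_+) < g(x_−). Consequently, for d > 0 the set {x > 0 : g(x) = d} has exactly three elements if and only if ρ·x_+²·log x_− < d < ρ·x_−²·log x_+, and exactly one element if 0 < d < ρ·x_+²·log x_− or d > ρ·x_−²·log x_+. -/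

import Mathlib

/-!
With `t₋ < t₊` the roots of `ρt² − ρt + μ² = 0` (so `t₋ + t₊ = 1` and `ρt₋t₊ = μ²`) one has
`g'(x) = 2ρx(log x − t₋)(log x − t₊)`, which gives the three intervals of monotonicity, and
`μ² + ρ(1 − t∓)² = ρt±`, which gives the critical values. Since `x log x → 0` as `x → 0⁺`, `g`
is continuous on `[0, ∞)` with `g 0 = 0`, and `g x ≥ μ²x² → ∞`. By the intermediate value
theorem `g` maps `(0, x₋]`, `(x₋, x₊)` and `[x₊, ∞)` bijectively onto `(0, g x₋]`,
`(g x₊, g x₋)` and `[g x₊, ∞)`, so `g = d` has as many solutions as there are of these three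
intervals containing `d`.
-/

open Real Set Filter

/-- `g(x) = F(x,0) = x²(μ² + ρ(1 − log x)²)`, where `F` is the first integral of the
phase-plane system associated to the curvature energy `Θ_μ` in the 2-space form of
curvature `ρ`. -/
noncomputable def gfun (μ ρ x : ℝ) : ℝ :=
  x ^ 2 * (μ ^ 2 + ρ * (1 - Real.log x) ^ 2)

theorem Set.InjOn.encard_inter_preimage_singleton {α β : Type*} {f : α → β} {s : Set α}
    (hf : InjOn f s) (d : β) : (s ∩ f ⁻¹' {d}).encard = (f '' s).indicator 1 d := by
  by_cases hd : d ∈ f '' s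
  · obtain ⟨x, hx, rfl⟩ := hd
    have : s ∩ f ⁻¹' {f x} = {x} :=
      Subset.antisymm (fun y hy => hf hy.1 hx hy.2) (singleton_subset_iff.2 ⟨hx, rfl⟩)
    simp [this, mem_image_of_mem f hx]
  · rw [indicator_of_notMem hd, encard_eq_zero, eq_empty_iff_forall_notMem]
    exact fun x hx => hd ⟨x, hx.1, hx.2⟩

section IntermediateValue

variable {α δ : Type*} [ConditionallyCompleteLinearOrder α] [TopologicalSpace α] [OrderTopology α]
  [DenselyOrdered α] [LinearOrder δ] [TopologicalSpace δ] [OrderClosedTopology δ]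
  {f : α → δ} {a b : α}

theorem StrictMonoOn.image_Ioc_of_continuousOn (hab : a ≤ b) (hf : StrictMonoOn f (Icc a b))
    (hc : ContinuousOn f (Icc a b)) : f '' Ioc a b = Ioc (f a) (f b) := by
  refine Subset.antisymm ?_ (intermediate_value_Ioc hab hc)
  rintro _ ⟨x, hx, rfl⟩
  exact ⟨hf (left_mem_Icc.2 hab) (Ioc_subset_Icc_self hx) hx.1,
    hf.monotoneOn (Ioc_subset_Icc_self hx) (right_mem_Icc.2 hab) hx.2⟩

theorem StrictAntiOn.image_Ioo_of_continuousOn (hab : a ≤ b) (hf : StrictAntiOn f (Icc a b))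
    (hc : ContinuousOn f (Icc a b)) : f '' Ioo a b = Ioo (f b) (f a) := by
  refine Subset.antisymm ?_ (intermediate_value_Ioo' hab hc)
  rintro _ ⟨x, hx, rfl⟩
  exact ⟨hf (Ioo_subset_Icc_self hx) (right_mem_Icc.2 hab) hx.2,
    hf (left_mem_Icc.2 hab) (Ioo_subset_Icc_self hx) hx.1⟩

theorem StrictMonoOn.image_Ici_of_tendsto_atTop (hf : StrictMonoOn f (Ici a))
    (hc : ContinuousOn f (Ici a)) (htop : Tendsto f atTop atTop) : f '' Ici a = Ici (f a) := by
  refine Subset.antisymm ?_ fun d hd => ?_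
  · rintro _ ⟨x, hx, rfl⟩
    exact hf.monotoneOn self_mem_Ici hx hx
  · obtain ⟨M, hdM, haM⟩ := ((htop.eventually_ge_atTop d).and (eventually_ge_atTop a)).exists
    obtain ⟨x, hx, rfl⟩ :=
      intermediate_value_Icc haM (hc.mono Icc_subset_Ici_self) ⟨hd, hdM⟩
    exact ⟨x, hx.1, rfl⟩

variable {l : α}

theorem encard_setOf_lt_and_eq_of_mono_anti_mono (hla : l ≤ a) (hab : a < b)
    (hc : ContinuousOn f (Ici l)) (h₁ : StrictMonoOn f (Icc l a))
    (h₂ : StrictAntiOn f (Icc a b)) (h₃ : StrictMonoOn f (Ici b))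
    (htop : Tendsto f atTop atTop) (d : δ) :
    {x | l < x ∧ f x = d}.encard = (Ioc (f l) (f a)).indicator 1 d +
      (Ioo (f b) (f a)).indicator 1 d + (Ici (f b)).indicator 1 d := by
  have hsplit : {x | l < x ∧ f x = d} =
      (Ioc l a ∩ f ⁻¹' {d}) ∪ ((Ioo a b ∩ f ⁻¹' {d}) ∪ (Ici b ∩ f ⁻¹' {d})) := by
    rw [← union_inter_distrib_right, ← union_inter_distrib_right, Ioo_union_Ici_eq_Ioi hab,
      Ioc_union_Ioi_eq_Ioi hla]
    rfl
  have hdisj₁ : Disjoint (Ioc l a ∩ f ⁻¹' {d}) ((Ioo a b ∩ f ⁻¹' {d}) ∪ (Ici b ∩ f ⁻¹' {d})) :=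
    Ioc_disjoint_Ioi_same.mono inter_subset_left <| union_subset
      (inter_subset_left.trans Ioo_subset_Ioi_self) (inter_subset_left.trans (Ici_subset_Ioi.2 hab))
  have hdisj₂ : Disjoint (Ioo a b ∩ f ⁻¹' {d}) (Ici b ∩ f ⁻¹' {d}) :=
    disjoint_left.2 fun x h₁ h₂ => h₁.1.2.not_ge h₂.1
  have hIcc : Icc a b ⊆ Ici l := fun x hx => hla.trans hx.1
  rw [hsplit, encard_union_eq hdisj₁, encard_union_eq hdisj₂, add_assoc,
    (h₁.mono Ioc_subset_Icc_self).injOn.encard_inter_preimage_singleton,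
    (h₂.mono Ioo_subset_Icc_self).injOn.encard_inter_preimage_singleton,
    h₃.injOn.encard_inter_preimage_singleton,
    h₁.image_Ioc_of_continuousOn hla (hc.mono Icc_subset_Ici_self),
    h₂.image_Ioo_of_continuousOn hab.le (hc.mono hIcc),
    h₃.image_Ici_of_tendsto_atTop (hc.mono (Ici_subset_Ici.2 (hla.trans hab.le))) htop]

end IntermediateValue

section Indicator

variable {δ : Type*} [LinearOrder δ] {p q r d : δ}

theorem indicator_Ioc_add_indicator_Ioo_add_indicator_Ici_eq_three_iff (hpq : p < q) :
    (Ioc p r).indicator (1 : δ → ℕ∞) d + (Ioo q r).indicator 1 d + (Ici q).indicator 1 d = 3 ↔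
      q < d ∧ d < r := by
  simp only [indicator_apply, mem_Ioc, mem_Ioo, mem_Ici, Pi.one_apply]
  constructor
  · intro h
    split_ifs at h with h₁ h₂ h₃ <;> first | exact h₂ | norm_num at h
  · rintro ⟨hqd, hdr⟩
    rw [if_pos ⟨hpq.trans hqd, hdr.le⟩, if_pos ⟨hqd, hdr⟩, if_pos hqd.le]
    rfl

theorem indicator_Ioc_add_indicator_Ioo_add_indicator_Ici_eq_one (hqr : q < r) (hpd : p < d)
    (hd : d < q ∨ r < d) :
    (Ioc p r).indicator (1 : δ → ℕ∞) d + (Ioo q r).indicator 1 d + (Ici q).indicator 1 d = 1 := by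
  simp only [indicator_apply, mem_Ioc, mem_Ioo, mem_Ici, Pi.one_apply]
  rcases hd with hdq | hrd
  · rw [if_pos ⟨hpd, (hdq.trans hqr).le⟩, if_neg fun h => hdq.not_gt h.1, if_neg hdq.not_ge]
    rfl
  · rw [if_neg fun h => hrd.not_ge h.2, if_neg fun h => hrd.not_gt h.2, if_pos (hqr.trans hrd).le]
    rfl

end Indicator

section QuadraticRoots

variable {μ ρ tm tp : ℝ}

theorem roots_add_eq_one_and_mul_eq (hρ : ρ ≠ 0) (hD : 0 ≤ ρ ^ 2 - 4 * μ ^ 2 * ρ)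
    (htm : tm = (ρ - √(ρ ^ 2 - 4 * μ ^ 2 * ρ)) / (2 * ρ))
    (htp : tp = (ρ + √(ρ ^ 2 - 4 * μ ^ 2 * ρ)) / (2 * ρ)) :
    tm + tp = 1 ∧ ρ * (tm * tp) = μ ^ 2 := by
  have hsq := sq_sqrt hD
  generalize √(ρ ^ 2 - 4 * μ ^ 2 * ρ) = r at htm htp hsq
  subst htm htp
  constructor
  · field_simp
    ring
  · field_simp
    linear_combination (-1 : ℝ) * hsq

theorem roots_pos_and_lt (hμ : 0 < 4 * μ ^ 2) (hρ : 4 * μ ^ 2 < ρ)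
    (htm : tm = (ρ - √(ρ ^ 2 - 4 * μ ^ 2 * ρ)) / (2 * ρ))
    (htp : tp = (ρ + √(ρ ^ 2 - 4 * μ ^ 2 * ρ)) / (2 * ρ)) :
    0 < tm ∧ tm < tp := by
  have hρ0 : 0 < ρ := hμ.trans hρ
  have hD : 0 < ρ ^ 2 - 4 * μ ^ 2 * ρ := by nlinarith
  have hsqrt : √(ρ ^ 2 - 4 * μ ^ 2 * ρ) < ρ := (sqrt_lt' hρ0).2 (by nlinarith)
  subst htm htp
  constructor
  · exact div_pos (by linarith) (by positivity)
  · exact div_lt_div_of_pos_right (by linarith [sqrt_pos.2 hD]) (by positivity)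

end QuadraticRoots

section Gfun

variable {μ ρ s t x : ℝ}

theorem gfun_eq_add (μ ρ x : ℝ) : gfun μ ρ x = μ ^ 2 * x ^ 2 + ρ * (x - x * log x) ^ 2 := by
  rw [gfun]; ring

theorem continuous_gfun (μ ρ : ℝ) : Continuous (gfun μ ρ) := by
  simp_rw [funext (gfun_eq_add μ ρ)]
  have := continuous_mul_log
  fun_prop

@[simp]
theorem gfun_zero (μ ρ : ℝ) : gfun μ ρ 0 = 0 := by simp [gfun]

theorem tendsto_gfun_atTop (hμ : μ ≠ 0) (hρ : 0 ≤ ρ) : Tendsto (gfun μ ρ) atTop atTop := by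
  refine tendsto_atTop_mono (fun x => ?_)
    ((tendsto_pow_atTop two_ne_zero).const_mul_atTop (pow_pos (abs_pos.2 hμ) 2))
  rw [gfun_eq_add, sq_abs]
  nlinarith [sq_nonneg (x - x * log x)]

theorem hasDerivAt_gfun (hx : x ≠ 0) :
    HasDerivAt (gfun μ ρ) (2 * x * (ρ * log x ^ 2 - ρ * log x + μ ^ 2)) x := by
  have h : HasDerivAt (fun y => y ^ 2 * (μ ^ 2 + ρ * (1 - log y) ^ 2)) _ x :=
    (hasDerivAt_pow 2 x).fun_mul
      (((hasDerivAt_log hx).const_sub 1).fun_pow 2 |>.const_mul ρ |>.const_add (μ ^ 2))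
  refine h.congr_deriv ?_
  field_simp
  ring

theorem deriv_gfun_eq_mul (hsum : s + t = 1) (hprod : ρ * (s * t) = μ ^ 2) (hx : x ≠ 0) :
    deriv (gfun μ ρ) x = 2 * ρ * x * (log x - s) * (log x - t) := by
  rw [(hasDerivAt_gfun hx).deriv]
  linear_combination (2 * x) * (ρ * log x * hsum - hprod)

theorem gfun_exp_eq (hsum : s + t = 1) (hprod : ρ * (s * t) = μ ^ 2) :
    gfun μ ρ (exp s) = ρ * exp s ^ 2 * t := by
  rw [gfun, log_exp, ← hprod]
  linear_combination ρ * exp s ^ 2 * (s - 1) * hsum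

theorem gfun_strictMonoOn_Icc_zero (hρ : 0 < ρ) (hst : s ≤ t) (hsum : s + t = 1)
    (hprod : ρ * (s * t) = μ ^ 2) : StrictMonoOn (gfun μ ρ) (Icc 0 (exp s)) := by
  refine strictMonoOn_of_deriv_pos (convex_Icc _ _) (continuous_gfun μ ρ).continuousOn
    fun x hx => ?_
  obtain ⟨hx0, hxs⟩ : x ∈ Ioo 0 (exp s) := by rwa [interior_Icc] at hx
  have hs : log x - s < 0 := sub_neg.2 ((log_lt_iff_lt_exp hx0).2 hxs)
  rw [deriv_gfun_eq_mul hsum hprod hx0.ne']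
  exact mul_pos_of_neg_of_neg (mul_neg_of_pos_of_neg (by positivity) hs) (by linarith)

theorem gfun_strictAntiOn_Icc (hρ : 0 < ρ) (hsum : s + t = 1)
    (hprod : ρ * (s * t) = μ ^ 2) : StrictAntiOn (gfun μ ρ) (Icc (exp s) (exp t)) := by
  refine strictAntiOn_of_deriv_neg (convex_Icc _ _) (continuous_gfun μ ρ).continuousOn
    fun x hx => ?_
  rw [interior_Icc] at hx
  have hx0 : 0 < x := (exp_pos s).trans hx.1
  have hs : 0 < log x - s := sub_pos.2 ((lt_log_iff_exp_lt hx0).2 hx.1)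
  have ht : log x - t < 0 := sub_neg.2 ((log_lt_iff_lt_exp hx0).2 hx.2)
  rw [deriv_gfun_eq_mul hsum hprod hx0.ne']
  exact mul_neg_of_pos_of_neg (mul_pos (by positivity) hs) ht

theorem gfun_strictMonoOn_Ici (hρ : 0 < ρ) (hst : s ≤ t) (hsum : s + t = 1)
    (hprod : ρ * (s * t) = μ ^ 2) : StrictMonoOn (gfun μ ρ) (Ici (exp t)) := by
  refine strictMonoOn_of_deriv_pos (convex_Ici _) (continuous_gfun μ ρ).continuousOn
    fun x hx => ?_
  rw [interior_Ici] at hx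
  have hx0 : 0 < x := (exp_pos t).trans hx
  have ht : 0 < log x - t := sub_pos.2 ((lt_log_iff_exp_lt hx0).2 hx)
  rw [deriv_gfun_eq_mul hsum hprod hx0.ne']
  exact mul_pos (mul_pos (by positivity) (by linarith)) ht

end Gfun

/-- For `ρ > 4μ² > 0`, with `t_∓ = (ρ ∓ √(ρ² − 4μ²ρ))/(2ρ)` and `x_∓ = e^{t_∓}` (so that
`1 < x₋ < x₊`), the function `g(x) = x²(μ² + ρ(1 − log x)²)` is strictly increasing on
`(0, x₋]`, strictly decreasing on `[x₋, x₊]`, strictly increasing on `[x₊, ∞)`, with local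
maximum `g(x₋) = ρx₋² log x₊` and local minimum `g(x₊) = ρx₊² log x₋`, and
`0 < g(x₊) < g(x₋)`. Consequently, for `d > 0` the set `{x > 0 : g(x) = d}` has exactly
three elements iff `ρx₊² log x₋ < d < ρx₋² log x₊`, and exactly one element if
`0 < d < ρx₊² log x₋` or `d > ρx₋² log x₊`. -/
theorem orbit_axis_cuts_sphere (μ ρ : ℝ) (hμ : 0 < 4 * μ ^ 2) (hρ : 4 * μ ^ 2 < ρ)
    (tm tp xm xp : ℝ)
    (htm : tm = (ρ - Real.sqrt (ρ ^ 2 - 4 * μ ^ 2 * ρ)) / (2 * ρ))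
    (htp : tp = (ρ + Real.sqrt (ρ ^ 2 - 4 * μ ^ 2 * ρ)) / (2 * ρ))
    (hxm : xm = Real.exp tm) (hxp : xp = Real.exp tp) :
    (1 < xm ∧ xm < xp) ∧
    StrictMonoOn (gfun μ ρ) (Set.Ioc 0 xm) ∧
    StrictAntiOn (gfun μ ρ) (Set.Icc xm xp) ∧
    StrictMonoOn (gfun μ ρ) (Set.Ici xp) ∧
    gfun μ ρ xm = ρ * xm ^ 2 * Real.log xp ∧
    gfun μ ρ xp = ρ * xp ^ 2 * Real.log xm ∧
    (0 < gfun μ ρ xp ∧ gfun μ ρ xp < gfun μ ρ xm) ∧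
    (∀ d : ℝ, 0 < d →
      (({x : ℝ | 0 < x ∧ gfun μ ρ x = d}.ncard = 3 ↔
          ρ * xp ^ 2 * Real.log xm < d ∧ d < ρ * xm ^ 2 * Real.log xp) ∧
        ((d < ρ * xp ^ 2 * Real.log xm ∨ ρ * xm ^ 2 * Real.log xp < d) →
          {x : ℝ | 0 < x ∧ gfun μ ρ x = d}.ncard = 1))) := by
  have hρ0 : 0 < ρ := hμ.trans hρ
  have hμ0 : μ ≠ 0 := by rintro rfl; simp at hμ
  obtain ⟨hsum, hprod⟩ := roots_add_eq_one_and_mul_eq hρ0.ne' (by nlinarith) htm htp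
  obtain ⟨htm0, htmtp⟩ := roots_pos_and_lt hμ hρ htm htp
  subst hxm hxp
  have hgm : gfun μ ρ (exp tm) = ρ * exp tm ^ 2 * log (exp tp) := by
    rw [log_exp]; exact gfun_exp_eq hsum hprod
  have hgp : gfun μ ρ (exp tp) = ρ * exp tp ^ 2 * log (exp tm) := by
    rw [log_exp]; exact gfun_exp_eq (by linarith) (mul_comm tm tp ▸ hprod)
  have h₁ := gfun_strictMonoOn_Icc_zero hρ0 htmtp.le hsum hprod
  have h₂ := gfun_strictAntiOn_Icc hρ0 hsum hprod
  have h₃ := gfun_strictMonoOn_Ici hρ0 htmtp.le hsum hprod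
  have hcount := encard_setOf_lt_and_eq_of_mono_anti_mono (exp_pos tm).le
    (exp_lt_exp.2 htmtp) (continuous_gfun μ ρ).continuousOn h₁ h₂ h₃
    (tendsto_gfun_atTop hμ0 hρ0.le)
  have hpos : 0 < gfun μ ρ (exp tp) := by rw [hgp, log_exp]; positivity
  have hlt : gfun μ ρ (exp tp) < gfun μ ρ (exp tm) :=
    h₂ (left_mem_Icc.2 (exp_lt_exp.2 htmtp).le) (right_mem_Icc.2 (exp_lt_exp.2 htmtp).le)
      (exp_lt_exp.2 htmtp)
  refine ⟨⟨one_lt_exp_iff.2 htm0, exp_lt_exp.2 htmtp⟩, h₁.mono Ioc_subset_Icc_self, h₂, h₃,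
    hgm, hgp, ⟨hpos, hlt⟩, fun d hd => ⟨?_, fun h => ?_⟩⟩
  · rw [ncard_eq_three, ← encard_eq_three, hcount, ← hgm, ← hgp]
    exact indicator_Ioc_add_indicator_Ioo_add_indicator_Ici_eq_three_iff (by rwa [gfun_zero])
  · rw [ncard_eq_one, ← encard_eq_one, hcount]
    rw [← hgm, ← hgp] at h
    exact indicator_Ioc_add_indicator_Ioo_add_indicator_Ici_eq_one hlt (by rwa [gfun_zero]) h
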